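/- arXiv:2206.08216 — 3 statements merged into one kernel-verified Lean document; each statement's English description precedes it below -/
import Mathlib

section
/- Let λ > 0, ν > 0, let f(x; λ, ν) be the GE density, and let μ = (ψ(ν + 1) − ψ(1)) / λ be the GE mean. Then the variance of the GE distribution satisfies ∫₀^∞ (x − μ)² f(x; λ, ν) dx = (ψ'(1) − ψ'(ν + 1)) / λ², where ψ' is the trigamma function (the derivative of the digamma function). -/
/-!
Substituting `t = exp (-λ x)` turns the GE law into the Beta(1, ν) law, with `x = -log t / λ`,
so the variance is `Var (log T) / λ²` for `T ~ Beta(1, ν)`. Differentiating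
`B(a, b) = ∫₀¹ t^(a-1) (1-t)^(b-1) dt = Γ(a) Γ(b) / Γ(a+b)`
under the integral sign in `a` gives
`∫₀¹ t^(a-1) (1-t)^(b-1) (log t)^k dt = ∂ₐᵏ B(a, b)`; for `k = 1, 2` these derivatives are
`B · (ψ(a) - ψ(a+b))` and `B · ((ψ(a) - ψ(a+b))² + ψ'(a) - ψ'(a+b))`,
whence `Var (log T) = ψ'(a) - ψ'(a+b)`.
-/

open Real Set

/-- The generalized exponential (GE) density with rate `l > 0` and shape `v > 0`. -/
noncomputable def geDensity (l v x : ℝ) : ℝ :=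
  l * v * Real.exp (-(l * x)) * (1 - Real.exp (-(l * x))) ^ (v - 1)

/-- The digamma function `ψ(x) = d/dx log Γ(x)`. -/
noncomputable def digamma : ℝ → ℝ := deriv fun x => Real.log (Real.Gamma x)

/-- The trigamma function `ψ'`, the derivative of the digamma function. -/
noncomputable def trigamma : ℝ → ℝ := deriv digamma

open MeasureTheory Filter Topology
open ProbabilityTheory (beta)

lemma Real.analyticAt_Gamma {x : ℝ} (hx : ∀ m : ℕ, x ≠ -m) : AnalyticAt ℝ Gamma x := by
  have hΓ : AnalyticAt ℂ Complex.Gamma x := by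
    simpa [Pi.inv_def] using (Complex.differentiable_one_div_Gamma.analyticAt _).inv
      (inv_ne_zero (Complex.Gamma_ne_zero fun m => by exact_mod_cast hx m))
  simpa [Complex.Gamma_ofReal] using hΓ.re_ofReal

lemma analyticAt_log_Gamma {x : ℝ} (hx : 0 < x) : AnalyticAt ℝ (fun y => log (Gamma y)) x :=
  (analyticAt_Gamma fun m => by linarith [m.cast_nonneg (α := ℝ)]).log (Gamma_pos_of_pos hx)

lemma hasDerivAt_digamma {x : ℝ} (hx : 0 < x) : HasDerivAt digamma (trigamma x) x :=
  (analyticAt_log_Gamma hx).deriv.differentiableAt.hasDerivAt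

lemma hasDerivAt_Gamma {x : ℝ} (hx : 0 < x) : HasDerivAt Gamma (digamma x * Gamma x) x := by
  have hexp := (analyticAt_log_Gamma hx).differentiableAt.hasDerivAt.exp
  have hΓ : (fun y => exp (log (Gamma y))) =ᶠ[𝓝 x] Gamma := by
    filter_upwards [lt_mem_nhds hx] with y hy using exp_log (Gamma_pos_of_pos hy)
  rw [exp_log (Gamma_pos_of_pos hx)] at hexp
  exact (hexp.congr_of_eventuallyEq hΓ.symm).congr_deriv (mul_comm _ _)

lemma hasDerivAt_beta_left {a b : ℝ} (ha : 0 < a) (hb : 0 < b) :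
    HasDerivAt (fun t => beta t b) (beta a b * (digamma a - digamma (a + b))) a := by
  have hab : Gamma (a + b) ≠ 0 := (Gamma_pos_of_pos (add_pos ha hb)).ne'
  refine (((hasDerivAt_Gamma ha).mul_const (Gamma b)).div
    ((hasDerivAt_Gamma (add_pos ha hb)).comp_add_const a b) hab).congr_deriv ?_
  simp only [beta]
  field_simp

lemma ofReal_cpow_mul_one_sub_cpow {a b u : ℝ} (hu : u ∈ Icc 0 1) :
    (u : ℂ) ^ ((a : ℂ) - 1) * (1 - (u : ℂ)) ^ ((b : ℂ) - 1) =
      ↑(u ^ (a - 1) * (1 - u) ^ (b - 1)) := by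
  push_cast [Complex.ofReal_cpow hu.1, Complex.ofReal_cpow (sub_nonneg.2 hu.2)]
  rfl

lemma integrableOn_rpow_mul_one_sub_rpow {a b : ℝ} (ha : 0 < a) (hb : 0 < b) :
    IntegrableOn (fun u : ℝ => u ^ (a - 1) * (1 - u) ^ (b - 1)) (Ioo 0 1) := by
  have h := (intervalIntegrable_iff_integrableOn_Ioo_of_le zero_le_one).1
    (Complex.betaIntegral_convergent (u := a) (v := b) (by simpa) (by simpa))
  refine IntegrableOn.congr_fun h.re (fun u hu => ?_) measurableSet_Ioo
  simp [ofReal_cpow_mul_one_sub_cpow (Ioo_subset_Icc_self hu)]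

lemma integral_rpow_mul_one_sub_rpow {a b : ℝ} (ha : 0 < a) (hb : 0 < b) :
    ∫ u in Ioo 0 1, u ^ (a - 1) * (1 - u) ^ (b - 1) = beta a b := by
  rw [ProbabilityTheory.beta_eq_betaIntegralReal a b ha hb, Complex.betaIntegral,
    intervalIntegral.integral_congr fun u hu => ofReal_cpow_mul_one_sub_cpow
      (by rwa [uIcc_of_le zero_le_one] at hu),
    intervalIntegral.integral_ofReal, Complex.ofReal_re,
    intervalIntegral.integral_of_le zero_le_one, integral_Ioc_eq_integral_Ioo]

lemma abs_log_pow_le {t ε : ℝ} (ht0 : 0 < t) (ht1 : t ≤ 1) (hε : 0 < ε) (k : ℕ) :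
    |log t| ^ k ≤ t ^ (-(ε * k)) / ε ^ k := by
  have h : |log t| ≤ t ^ (-ε) / ε := by
    have := abs_log_mul_self_rpow_lt t ε ht0 ht1 hε
    rw [abs_mul, abs_of_pos (rpow_pos_of_pos ht0 ε),
      ← lt_div_iff₀ (rpow_pos_of_pos ht0 ε)] at this
    rw [rpow_neg ht0.le]
    exact this.le.trans_eq (by ring)
  calc |log t| ^ k ≤ (t ^ (-ε) / ε) ^ k := pow_le_pow_left₀ (abs_nonneg _) h k
    _ = t ^ (-(ε * k)) / ε ^ k := by rw [div_pow, neg_mul_eq_neg_mul, rpow_mul_natCast ht0.le]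

lemma integrableOn_rpow_mul_one_sub_rpow_mul_abs_log_pow {a b : ℝ} (ha : 0 < a) (hb : 0 < b)
    (k : ℕ) :
    IntegrableOn (fun u : ℝ => u ^ (a - 1) * (1 - u) ^ (b - 1) * |log u| ^ k) (Ioo 0 1) := by
  set ε := a / (2 * (k + 1))
  have hε : 0 < ε := by positivity
  have hεk : ε * k < a := by
    rw [div_mul_eq_mul_div, div_lt_iff₀ (by positivity)]
    nlinarith
  refine ((integrableOn_rpow_mul_one_sub_rpow (sub_pos.2 hεk) hb).div_const (ε ^ k)).mono'
    (by fun_prop) ((ae_restrict_iff' measurableSet_Ioo).2 (.of_forall fun u ⟨hu0, hu1⟩ => ?_))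
  rw [norm_of_nonneg (by positivity), show a - ε * k - 1 = a - 1 + -(ε * k) by ring,
    rpow_add hu0]
  calc u ^ (a - 1) * (1 - u) ^ (b - 1) * |log u| ^ k
      ≤ u ^ (a - 1) * (1 - u) ^ (b - 1) * (u ^ (-(ε * k)) / ε ^ k) := by
        gcongr
        exact abs_log_pow_le hu0 hu1.le hε k
    _ = _ := by ring

lemma integrableOn_rpow_mul_one_sub_rpow_mul_log_pow {a b : ℝ} (ha : 0 < a) (hb : 0 < b)
    (k : ℕ) :
    IntegrableOn (fun u : ℝ => u ^ (a - 1) * (1 - u) ^ (b - 1) * log u ^ k) (Ioo 0 1) := by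
  refine (integrableOn_rpow_mul_one_sub_rpow_mul_abs_log_pow ha hb k).mono' (by fun_prop)
    ((ae_restrict_iff' measurableSet_Ioo).2 (.of_forall fun u ⟨hu0, hu1⟩ => ?_))
  have : 0 ≤ u ^ (a - 1) * (1 - u) ^ (b - 1) := by have := sub_pos.2 hu1; positivity
  rw [norm_mul, norm_pow, norm_eq_abs, norm_eq_abs, abs_of_nonneg this]

noncomputable def betaLogMoment (a b : ℝ) (k : ℕ) : ℝ :=
  ∫ u in Ioo 0 1, u ^ (a - 1) * (1 - u) ^ (b - 1) * log u ^ k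

lemma hasDerivAt_betaLogMoment {a b : ℝ} (ha : 0 < a) (hb : 0 < b) (k : ℕ) :
    HasDerivAt (fun t => betaLogMoment t b k) (betaLogMoment a b (k + 1)) a := by
  refine (hasDerivAt_integral_of_dominated_loc_of_deriv_le
    (F := fun t u => u ^ (t - 1) * (1 - u) ^ (b - 1) * log u ^ k)
    (F' := fun t u => u ^ (t - 1) * (1 - u) ^ (b - 1) * log u ^ (k + 1))
    (Metric.ball_mem_nhds a (half_pos ha))
    (.of_forall fun t => by fun_prop) (integrableOn_rpow_mul_one_sub_rpow_mul_log_pow ha hb k)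
    (by fun_prop) ?_ (integrableOn_rpow_mul_one_sub_rpow_mul_abs_log_pow (half_pos ha) hb (k + 1))
    ?_).2 <;>
    refine (ae_restrict_iff' measurableSet_Ioo).2 (.of_forall fun u ⟨hu0, hu1⟩ t ht => ?_)
  -- on `ball a (a / 2)` we have `u ^ (t - 1) ≤ u ^ (a / 2 - 1)`, so the `a / 2` moment dominates
  · have hta : a / 2 - 1 ≤ t - 1 := by
      have := (abs_lt.1 (mem_ball_iff_norm.1 ht)).1
      linarith
    have : 0 ≤ (1 - u) ^ (b - 1) := by have := sub_pos.2 hu1; positivity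
    simp only [norm_mul, norm_pow, Real.norm_eq_abs, abs_of_nonneg (rpow_nonneg hu0.le _),
      abs_of_nonneg this]
    gcongr ?_ * _ * _
    exact rpow_le_rpow_of_exponent_ge hu0 hu1.le hta
  · have := (((hasDerivAt_id' t).sub_const 1).const_rpow hu0).mul_const
      ((1 - u) ^ (b - 1) * log u ^ k)
    simp only [mul_assoc] at this ⊢
    exact this.congr_deriv (by ring)

lemma betaLogMoment_zero {a b : ℝ} (ha : 0 < a) (hb : 0 < b) :
    betaLogMoment a b 0 = beta a b := by
  simpa [betaLogMoment] using integral_rpow_mul_one_sub_rpow ha hb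

lemma betaLogMoment_one {a b : ℝ} (ha : 0 < a) (hb : 0 < b) :
    betaLogMoment a b 1 = beta a b * (digamma a - digamma (a + b)) := by
  refine (hasDerivAt_betaLogMoment ha hb 0).unique
    ((hasDerivAt_beta_left ha hb).congr_of_eventuallyEq ?_)
  filter_upwards [lt_mem_nhds ha] with t ht using betaLogMoment_zero ht hb

lemma betaLogMoment_two {a b : ℝ} (ha : 0 < a) (hb : 0 < b) :
    betaLogMoment a b 2 =
      beta a b * ((digamma a - digamma (a + b)) ^ 2 + (trigamma a - trigamma (a + b))) := by
  have hψ := (hasDerivAt_digamma ha).sub ((hasDerivAt_digamma (add_pos ha hb)).comp_add_const a b)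
  refine (hasDerivAt_betaLogMoment ha hb 1).unique
    ((((hasDerivAt_beta_left ha hb).mul hψ).congr_of_eventuallyEq ?_).congr_deriv
      (by simp only [Pi.sub_apply]; ring))
  filter_upwards [lt_mem_nhds ha] with t ht using betaLogMoment_one ht hb

lemma integral_rpow_mul_one_sub_rpow_mul_log_sub_sq {a b : ℝ} (ha : 0 < a) (hb : 0 < b) :
    ∫ u in Ioo 0 1, u ^ (a - 1) * (1 - u) ^ (b - 1) * (log u - (digamma a - digamma (a + b))) ^ 2
      = beta a b * (trigamma a - trigamma (a + b)) := by
  set m := digamma a - digamma (a + b)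
  have hint := integrableOn_rpow_mul_one_sub_rpow_mul_log_pow ha hb
  have hexpand : ∫ u in Ioo 0 1, u ^ (a - 1) * (1 - u) ^ (b - 1) * (log u - m) ^ 2
      = betaLogMoment a b 2 - 2 * m * betaLogMoment a b 1 + m ^ 2 * betaLogMoment a b 0 := by
    have hsplit : EqOn (fun u => u ^ (a - 1) * (1 - u) ^ (b - 1) * (log u - m) ^ 2)
        (fun u => (u ^ (a - 1) * (1 - u) ^ (b - 1) * log u ^ 2
          - 2 * m * (u ^ (a - 1) * (1 - u) ^ (b - 1) * log u ^ 1))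
          + m ^ 2 * (u ^ (a - 1) * (1 - u) ^ (b - 1) * log u ^ 0)) (Ioo 0 1) :=
      fun u _ => by ring
    rw [setIntegral_congr_fun measurableSet_Ioo hsplit,
      integral_add ((hint 2).sub' ((hint 1).const_mul _)) ((hint 0).const_mul _),
      integral_sub (hint 2) ((hint 1).const_mul _), integral_const_mul, integral_const_mul]
    rfl
  rw [hexpand, betaLogMoment_zero ha hb, betaLogMoment_one ha hb, betaLogMoment_two ha hb]
  ring

lemma setIntegral_Ioi_mul_geDensity {l : ℝ} (hl : 0 < l) (v : ℝ) (g : ℝ → ℝ) :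
    ∫ x in Ioi 0, g x * geDensity l v x =
      ∫ t in Ioo 0 1, g (-log t / l) * (v * (1 - t) ^ (v - 1)) := by
  have himage : (fun x => exp (-(l * x))) '' Ioi 0 = Ioo 0 1 := by
    ext t
    constructor
    · rintro ⟨x, hx, rfl⟩
      exact ⟨exp_pos _, exp_lt_one_iff.2 (neg_lt_zero.2 (mul_pos hl hx))⟩
    · rintro ⟨ht0, ht1⟩
      refine ⟨-log t / l, div_pos (neg_pos.2 (log_neg ht0 ht1)) hl, ?_⟩
      show exp (-(l * (-log t / l))) = t
      rw [mul_div_cancel₀ _ hl.ne', neg_neg, exp_log ht0]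
  have hderiv : ∀ x ∈ Ioi (0 : ℝ),
      HasDerivWithinAt (fun x => exp (-(l * x))) (exp (-(l * x)) * -l) (Ioi 0) x := fun x _ =>
    (((hasDerivAt_id' x).const_mul l).neg.exp.congr_deriv (by simp)).hasDerivWithinAt
  have hinj : InjOn (fun x => exp (-(l * x))) (Ioi 0) := fun x _ y _ h =>
    mul_left_cancel₀ hl.ne' (neg_injective (exp_injective h))
  rw [← himage, integral_image_eq_integral_abs_deriv_smul measurableSet_Ioi hderiv hinj]
  refine setIntegral_congr_fun measurableSet_Ioi fun x _ => ?_
  rw [smul_eq_mul, log_exp, neg_neg, mul_div_cancel_left₀ _ hl.ne', abs_mul, abs_neg,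
    abs_of_pos hl, abs_of_pos (exp_pos _), geDensity]
  ring

/-- The variance of the GE distribution: with mean `μ = (ψ(ν+1) − ψ(1))/λ`,
`∫₀^∞ (x − μ)² f(x; λ, ν) dx = (ψ'(1) − ψ'(ν+1)) / λ²`. -/
theorem ge_variance (l v : ℝ) (hl : 0 < l) (hv : 0 < v)
    (μ : ℝ) (hμ : μ = (digamma (v + 1) - digamma 1) / l) :
    ∫ x in Ioi (0 : ℝ), (x - μ) ^ 2 * geDensity l v x =
      (trigamma 1 - trigamma (v + 1)) / l ^ 2 := by
  have hpoint : ∀ t ∈ Ioo (0 : ℝ) 1, (-log t / l - μ) ^ 2 * (v * (1 - t) ^ (v - 1)) =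
      v / l ^ 2 * (t ^ ((1 : ℝ) - 1) * (1 - t) ^ (v - 1) *
        (log t - (digamma 1 - digamma (1 + v))) ^ 2) := by
    intro t _
    rw [hμ, add_comm 1 v, sub_self, rpow_zero]
    field_simp
    ring
  have hbeta : beta 1 v = 1 / v := by
    rw [ProbabilityTheory.beta, Gamma_one, add_comm, Gamma_add_one hv.ne']
    field_simp [(Gamma_pos_of_pos hv).ne']
  rw [setIntegral_Ioi_mul_geDensity hl v fun x => (x - μ) ^ 2,
    setIntegral_congr_fun measurableSet_Ioo hpoint, integral_const_mul,
    integral_rpow_mul_one_sub_rpow_mul_log_sub_sq one_pos hv, hbeta, add_comm 1 v]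
  field_simp
end

section
/- Let α ≥ 0, λ > 0, and ν > max(1, α/(1 + α)), let f(x; λ, ν) be the GE density, and let u_λ(x) = 1/λ − x + (ν − 1) x exp(−λx)/(1 − exp(−λx)) be the score function with respect to λ. Then ∫₀^∞ u_λ(x) f(x; λ, ν)^(1+α) dx = λ^(α−1) ν^(α+1) B(1 + α, (1 + α)(ν − 1) + 1) (1 + ψ(1 + α) − ψ(2 + α)). -/
open Real Set

/-- The GE score function with respect to the rate parameter `λ`. -/
noncomputable def geScoreRate (l v x : ℝ) : ℝ :=
  1 / l - x + (v - 1) * x * Real.exp (-(l * x)) / (1 - Real.exp (-(l * x)))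

/-- The real Beta function `B(a, b) = Γ(a)Γ(b)/Γ(a+b)`. -/
noncomputable def realBeta (a b : ℝ) : ℝ :=
  Real.Gamma a * Real.Gamma b / Real.Gamma (a + b)

/-!
The substitution `t = exp (-λx)` turns the integral into
`λ^(α-1) ν^(α+1) ∫₀¹ t^α (1-t)^(q-1) ((1-t)(1 + log t) - (ν-1) t log t) dt`
with `q = (1+α)(ν-1)`, i.e. into Beta integrals and log-moments of Beta integrands. The latter are `∂ₚ B(p, q)`, obtained
by differentiating under the integral sign, and equal `B(p, q) (ψ(p) - ψ(p+q))`. The recurrence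
`p B(p, q+1) = q B(p+1, q)` then makes the two `ψ(p+q+1)` terms cancel.
-/

open MeasureTheory Metric

noncomputable def betaKernel (p q t : ℝ) : ℝ := t ^ (p - 1) * (1 - t) ^ (q - 1)

section Beta

variable {p q t : ℝ}

lemma betaKernel_nonneg (ht : t ∈ Ioo (0 : ℝ) 1) : 0 ≤ betaKernel p q t :=
  mul_nonneg (rpow_nonneg ht.1.le _) (rpow_nonneg (sub_pos.2 ht.2).le _)

lemma betaKernel_le_of_le {p' : ℝ} (ht : t ∈ Ioo (0 : ℝ) 1) (hp : p ≤ p') :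
    betaKernel p' q t ≤ betaKernel p q t :=
  mul_le_mul_of_nonneg_right (rpow_le_rpow_of_exponent_ge ht.1 ht.2.le (by linarith))
    (rpow_nonneg (sub_pos.2 ht.2).le _)

lemma continuousOn_betaKernel (p q : ℝ) : ContinuousOn (betaKernel p q) (Ioo 0 1) := fun t ht =>
  ((continuousAt_rpow_const t _ (Or.inl ht.1.ne')).mul
    ((continuousAt_rpow_const (1 - t) _ (Or.inl (sub_pos.2 ht.2).ne')).comp
      (continuous_const.sub continuous_id).continuousAt)).continuousWithinAt

lemma ofReal_betaKernel (p q : ℝ) (ht : t ∈ Ioo (0 : ℝ) 1) :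
    ((betaKernel p q t : ℝ) : ℂ) = (t : ℂ) ^ ((p : ℂ) - 1) * (1 - (t : ℂ)) ^ ((q : ℂ) - 1) := by
  rw [betaKernel, Complex.ofReal_mul, Complex.ofReal_cpow ht.1.le,
    Complex.ofReal_cpow (sub_pos.2 ht.2).le]
  push_cast
  rfl

lemma integrableOn_betaKernel (hp : 0 < p) (hq : 0 < q) :
    IntegrableOn (betaKernel p q) (Ioo 0 1) := by
  have h := (Complex.betaIntegral_convergent (u := p) (v := q) (by simpa) (by simpa)).1
  rw [IntegrableOn, ← restrict_Ioo_eq_restrict_Ioc] at h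
  refine h.re.congr (ae_restrict_of_forall_mem measurableSet_Ioo fun t ht => ?_)
  simp [← ofReal_betaKernel p q ht]

lemma integral_betaKernel (hp : 0 < p) (hq : 0 < q) :
    ∫ t in Ioo 0 1, betaKernel p q t = realBeta p q := by
  have hB := Complex.Gamma_mul_Gamma_eq_betaIntegral (s := p) (t := q) (by simpa) (by simpa)
  rw [Complex.betaIntegral, intervalIntegral.integral_of_le zero_le_one,
    integral_Ioc_eq_integral_Ioo,
    ← setIntegral_congr_fun measurableSet_Ioo fun t ht => ofReal_betaKernel p q ht,
    integral_complex_ofReal, ← Complex.ofReal_add, Complex.Gamma_ofReal, Complex.Gamma_ofReal,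
    Complex.Gamma_ofReal, ← Complex.ofReal_mul, ← Complex.ofReal_mul] at hB
  rw [realBeta, eq_div_iff (Gamma_pos_of_pos (add_pos hp hq)).ne', mul_comm]
  exact_mod_cast hB.symm

lemma abs_log_le_inv_mul_rpow_neg (ht₀ : 0 < t) (ht₁ : t ≤ 1) {ε : ℝ} (hε : 0 < ε) :
    |log t| ≤ ε⁻¹ * t ^ (-ε) := by
  have h := (abs_log_mul_self_rpow_lt t ε ht₀ ht₁ hε).le
  rw [abs_mul, abs_of_pos (rpow_pos_of_pos ht₀ ε), ← le_div_iff₀ (rpow_pos_of_pos ht₀ ε),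
    one_div, div_eq_mul_inv, ← rpow_neg ht₀.le] at h
  exact h

lemma norm_betaKernel_mul_log_le (ht : t ∈ Ioo (0 : ℝ) 1) {ε : ℝ} (hε : 0 < ε) :
    ‖betaKernel p q t * log t‖ ≤ ε⁻¹ * betaKernel (p - ε) q t := by
  rw [norm_mul, Real.norm_of_nonneg (betaKernel_nonneg ht), Real.norm_eq_abs]
  calc betaKernel p q t * |log t| ≤ betaKernel p q t * (ε⁻¹ * t ^ (-ε)) :=
        mul_le_mul_of_nonneg_left (abs_log_le_inv_mul_rpow_neg ht.1 ht.2.le hε)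
          (betaKernel_nonneg ht)
    _ = ε⁻¹ * betaKernel (p - ε) q t := by
        rw [betaKernel, betaKernel, show p - ε - 1 = p - 1 + -ε by ring, rpow_add ht.1]
        ring

lemma hasDerivAt_betaKernel_left (p q : ℝ) (ht : 0 < t) :
    HasDerivAt (fun s => betaKernel s q t) (betaKernel p q t * log t) p := by
  have h := ((hasStrictDerivAt_const_rpow ht (p - 1)).hasDerivAt.comp p
    ((hasDerivAt_id p).sub_const 1)).mul_const ((1 - t) ^ (q - 1))
  refine h.congr_deriv ?_
  unfold betaKernel
  ring

lemma hasDerivAt_integral_betaKernel_left (hp : 0 < p) (hq : 0 < q) :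
    IntegrableOn (fun t => betaKernel p q t * log t) (Ioo 0 1) ∧
      HasDerivAt (fun s => ∫ t in Ioo 0 1, betaKernel s q t)
        (∫ t in Ioo 0 1, betaKernel p q t * log t) p := by
  refine hasDerivAt_integral_of_dominated_loc_of_deriv_le (bound := fun t =>
      (p / 4)⁻¹ * betaKernel (p / 4) q t) (ball_mem_nhds p (half_pos hp))
    (Filter.Eventually.of_forall fun s =>
      (continuousOn_betaKernel s q).aestronglyMeasurable measurableSet_Ioo)
    (integrableOn_betaKernel hp hq)
    (((continuousOn_betaKernel p q).mul (continuousOn_log.mono fun t ht => ht.1.ne')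
      ).aestronglyMeasurable measurableSet_Ioo)
    (ae_restrict_of_forall_mem measurableSet_Ioo fun t ht s hs => ?_)
    ((integrableOn_betaKernel (by positivity) hq).const_mul _)
    (ae_restrict_of_forall_mem measurableSet_Ioo fun t ht s _ =>
      hasDerivAt_betaKernel_left s q ht.1)
  have hs' : p / 2 < s := by
    rw [mem_ball, Real.dist_eq, abs_lt] at hs
    linarith
  refine (norm_betaKernel_mul_log_le (ε := p / 4) ht (by positivity)).trans ?_
  exact mul_le_mul_of_nonneg_left (betaKernel_le_of_le ht (by linarith)) (by positivity)

lemma hasDerivAt_Gamma_of_pos {x : ℝ} (hx : 0 < x) :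
    HasDerivAt Gamma (Gamma x * digamma x) x := by
  have hd := (differentiableAt_Gamma fun m h => by
    linarith [(m.cast_nonneg : (0 : ℝ) ≤ m)]).hasDerivAt
  have hΓ := Gamma_pos_of_pos hx
  have hψ : digamma x = deriv Gamma x / Gamma x := (hd.log hΓ.ne').deriv
  rwa [hψ, mul_div_cancel₀ _ hΓ.ne']

lemma hasDerivAt_realBeta_left (hp : 0 < p) (hq : 0 < q) :
    HasDerivAt (fun s => realBeta s q) (realBeta p q * (digamma p - digamma (p + q))) p := by
  have hpq : 0 < p + q := add_pos hp hq
  have hΓpq := hasDerivAt_Gamma_of_pos hpq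
  have hden : HasDerivAt (fun s => Gamma (s + q)) (Gamma (p + q) * digamma (p + q)) p :=
    hΓpq.comp_add_const p q
  refine (((hasDerivAt_Gamma_of_pos hp).mul_const (Gamma q)).div hden
    (Gamma_pos_of_pos hpq).ne').congr_deriv ?_
  have := (Gamma_pos_of_pos hpq).ne'
  unfold realBeta
  field_simp

lemma integral_betaKernel_mul_log (hp : 0 < p) (hq : 0 < q) :
    ∫ t in Ioo 0 1, betaKernel p q t * log t = realBeta p q * (digamma p - digamma (p + q)) := by
  have hB : (fun s => ∫ t in Ioo 0 1, betaKernel s q t) =ᶠ[nhds p] fun s => realBeta s q := by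
    filter_upwards [eventually_gt_nhds hp] with s hs using integral_betaKernel hs hq
  exact ((hasDerivAt_integral_betaKernel_left hp hq).2.congr_of_eventuallyEq hB.symm).unique
    (hasDerivAt_realBeta_left hp hq)

lemma mul_realBeta_add_one_right (hp : p ≠ 0) (hq : q ≠ 0) :
    p * realBeta p (q + 1) = q * realBeta (p + 1) q := by
  simp only [realBeta, Gamma_add_one hp, Gamma_add_one hq, show p + (q + 1) = p + 1 + q by ring]
  ring

end Beta

/-- The integrand after the substitution `t = exp (-λx)`, up to the factor `λ^(α-1) ν^(α+1)`. -/
noncomputable def geScoreRateKernel (a v t : ℝ) : ℝ :=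
  betaKernel (1 + a) ((1 + a) * (v - 1) + 1) t * (1 + log t) -
    (v - 1) * (betaKernel (2 + a) ((1 + a) * (v - 1)) t * log t)

lemma integral_geScoreRateKernel {a v : ℝ} (ha : 0 < 1 + a) (hv : 1 < v) :
    ∫ t in Ioo 0 1, geScoreRateKernel a v t =
      realBeta (1 + a) ((1 + a) * (v - 1) + 1) * (1 + digamma (1 + a) - digamma (2 + a)) := by
  set p := 1 + a
  set q := p * (v - 1)
  have hq : 0 < q := mul_pos ha (sub_pos.2 hv)
  have h2 : 2 + a = p + 1 := by ring
  have I₀ := integrableOn_betaKernel ha (by linarith : 0 < q + 1)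
  have I₁ := (hasDerivAt_integral_betaKernel_left ha (by linarith : 0 < q + 1)).1
  have I₂ := (hasDerivAt_integral_betaKernel_left (by linarith : 0 < p + 1) hq).1
  have hrec : (v - 1) * realBeta (p + 1) q = realBeta p (q + 1) := by
    refine mul_left_cancel₀ ha.ne' ?_
    rw [mul_realBeta_add_one_right ha.ne' hq.ne']
    ring
  have hK : geScoreRateKernel a v = fun t => betaKernel p (q + 1) t +
      betaKernel p (q + 1) t * log t - (v - 1) * (betaKernel (p + 1) q t * log t) := by
    funext t
    rw [geScoreRateKernel, h2, mul_one_add]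
  simp only [hK, h2]
  rw [integral_sub ?_ (I₂.const_mul _), integral_add I₀ I₁, integral_const_mul,
    integral_betaKernel ha (by linarith), integral_betaKernel_mul_log ha (by linarith),
    integral_betaKernel_mul_log (by linarith) hq,
    show p + 1 + q = p + (q + 1) by ring]
  · linear_combination (digamma (p + (q + 1)) - digamma (p + 1)) * hrec
  · exact I₀.add I₁

lemma exp_neg_mul_mem_Ioo {l x : ℝ} (hl : 0 < l) (hx : 0 < x) : exp (-(l * x)) ∈ Ioo 0 1 :=
  ⟨exp_pos _, exp_lt_one_iff.2 (neg_neg_of_pos (mul_pos hl hx))⟩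

lemma image_exp_neg_mul_Ioi {l : ℝ} (hl : 0 < l) :
    (fun x => exp (-(l * x))) '' Ioi 0 = Ioo 0 1 := by
  refine Subset.antisymm (image_subset_iff.2 fun x hx => exp_neg_mul_mem_Ioo hl hx) fun t ht => ?_
  refine ⟨-log t / l, div_pos (neg_pos.2 (log_neg ht.1 ht.2)) hl, ?_⟩
  change exp (-(l * (-log t / l))) = t
  rw [mul_div_cancel₀ _ hl.ne', neg_neg, exp_log ht.1]

lemma integral_Ioi_exp_neg_mul_smul {E : Type*} [NormedAddCommGroup E] [NormedSpace ℝ E]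
    {l : ℝ} (hl : 0 < l) (g : ℝ → E) :
    ∫ x in Ioi 0, (l * exp (-(l * x))) • g (exp (-(l * x))) = ∫ t in Ioo 0 1, g t := by
  have hderiv : ∀ x ∈ Ioi (0 : ℝ),
      HasDerivWithinAt (fun x => exp (-(l * x))) (-l * exp (-(l * x))) (Ioi 0) x := fun x _ =>
    (((hasDerivAt_id x).const_mul l).neg.exp.congr_deriv (by simp; ring)).hasDerivWithinAt
  have hinj : InjOn (fun x => exp (-(l * x))) (Ioi 0) := fun x _ y _ hxy =>
    mul_left_cancel₀ hl.ne' (neg_injective (exp_injective hxy))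
  rw [← image_exp_neg_mul_Ioi hl,
    integral_image_eq_integral_abs_deriv_smul measurableSet_Ioi hderiv hinj g]
  refine setIntegral_congr_fun measurableSet_Ioi fun x _ => ?_
  rw [abs_mul, abs_neg, abs_of_pos hl, abs_of_pos (exp_pos _)]

lemma geScoreRate_mul_geDensity_rpow (a : ℝ) {l v x : ℝ} (hl : 0 < l) (hv : 0 ≤ v) (hx : 0 < x) :
    geScoreRate l v x * geDensity l v x ^ (1 + a) =
      l * exp (-(l * x)) *
        (l ^ (a - 1) * v ^ (a + 1) * geScoreRateKernel a v (exp (-(l * x)))) := by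
  obtain ⟨ht₀, ht₁⟩ := exp_neg_mul_mem_Ioo hl hx
  set t := exp (-(l * x)) with ht
  have hlog : log t = -(l * x) := log_exp _
  have h1t : 0 < 1 - t := sub_pos.2 ht₁
  have hdens : geDensity l v x ^ (1 + a) =
      l ^ (1 + a) * v ^ (1 + a) * t ^ (1 + a) * (1 - t) ^ ((1 + a) * (v - 1)) := by
    rw [geDensity, ← ht, mul_rpow (by positivity) (by positivity), mul_rpow (by positivity) ht₀.le,
      mul_rpow hl.le hv, ← rpow_mul h1t.le, mul_comm (v - 1)]
  have hlpow : l ^ (1 + a) = l * l * l ^ (a - 1) := by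
    rw [show 1 + a = 1 + 1 + (a - 1) by ring, rpow_add hl, rpow_add hl, rpow_one]
  have htpow : t ^ (1 + a) = t * t ^ a := by rw [rpow_add ht₀, rpow_one]
  have h1tpow : (1 - t) ^ ((1 + a) * (v - 1)) = (1 - t) * (1 - t) ^ ((1 + a) * (v - 1) - 1) := by
    simpa only [rpow_one, add_sub_cancel] using rpow_add h1t 1 ((1 + a) * (v - 1) - 1)
  rw [hdens, geScoreRateKernel, betaKernel, betaKernel, hlog, show 1 + a - 1 = a by ring,
    show 2 + a - 1 = 1 + a by ring, add_sub_cancel_right, hlpow, htpow, h1tpow, add_comm a 1,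
    geScoreRate, ← ht]
  field_simp
  ring

/-- For `α ≥ 0`, `λ > 0` and `ν > max(1, α/(1+α))`,
`∫₀^∞ u_λ(x) f(x; λ, ν)^(1+α) dx
  = λ^(α−1) ν^(α+1) B(1+α, (1+α)(ν−1)+1) (1 + ψ(1+α) − ψ(2+α))`. -/
theorem ge_weighted_score_rate_integral (a l v : ℝ) (ha : 0 ≤ a) (hl : 0 < l)
    (hv : max 1 (a / (1 + a)) < v) :
    ∫ x in Ioi (0 : ℝ), geScoreRate l v x * geDensity l v x ^ (1 + a) =
      l ^ (a - 1) * v ^ (a + 1) * realBeta (1 + a) ((1 + a) * (v - 1) + 1) *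
        (1 + digamma (1 + a) - digamma (2 + a)) := by
  have hv₁ : 1 < v := (le_max_left _ _).trans_lt hv
  calc ∫ x in Ioi (0 : ℝ), geScoreRate l v x * geDensity l v x ^ (1 + a)
      = ∫ x in Ioi (0 : ℝ), (l * exp (-(l * x))) •
          (l ^ (a - 1) * v ^ (a + 1) * geScoreRateKernel a v (exp (-(l * x)))) :=
        setIntegral_congr_fun measurableSet_Ioi fun x hx => by
          rw [smul_eq_mul, geScoreRate_mul_geDensity_rpow a hl (by linarith) hx]
    _ = ∫ t in Ioo 0 1, l ^ (a - 1) * v ^ (a + 1) * geScoreRateKernel a v t :=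
        integral_Ioi_exp_neg_mul_smul hl fun t =>
          l ^ (a - 1) * v ^ (a + 1) * geScoreRateKernel a v t
    _ = _ := by
        rw [integral_const_mul, integral_geScoreRateKernel (by linarith) hv₁]
        ring
end

section
/- (Theorem 3) Let λ > 0 and ν > 1, let f(x; λ, ν) be the GE density, and let u_λ, u_ν be the GE score functions. For α ≥ 0, both of the weighted score functions x ↦ u_λ(x) f(x; λ, ν)^α and x ↦ u_ν(x) f(x; λ, ν)^α are bounded on (0, ∞) if and only if α > 0; equivalently, the influence function of the minimum density power divergence functional with tuning parameter α at the GE model, each of whose components is an affine image of these weighted scores, has bounded components if and only if α > 0. -/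
/-!
For `α > 0` the rate score satisfies `|u_λ(x)| ≤ x + ν/λ`, because
`λx e^{-λx} ≤ 1 - e^{-λx}`, and `(x + ν/λ) f^α` is continuous on `[0, ∞)` and decays at `∞`
since `f^α` carries the factor `e^{-αλx}`. The shape term factors as
`(λν)^α e^{-αλx} (1/ν + log s) s^{(ν-1)α}` with `s = 1 - e^{-λx}`; it tends to `0` as
`x → 0⁺` (so `s → 0⁺`) because `(ν-1)α > 0`, and as `x → ∞`. A continuous function on
`(0, ∞)` with finite limits at both ends is bounded.
For `α = 0` the shape score `1/ν + log(1 - e^{-λx})` tends to `-∞` as `x → 0⁺`.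
-/

open Real Set

/-- The GE score function with respect to the shape parameter `ν`. -/
noncomputable def geScoreShape (l v x : ℝ) : ℝ :=
  1 / v + Real.log (1 - Real.exp (-(l * x)))

open Filter Topology

lemma exists_abs_le_of_continuousOn_Ioi_of_tendsto {g : ℝ → ℝ} {b c₀ c₁ : ℝ}
    (hg : ContinuousOn g (Ioi b)) (h₀ : Tendsto g (𝓝[>] b) (𝓝 c₀))
    (h₁ : Tendsto g atTop (𝓝 c₁)) :
    ∃ M, ∀ x ∈ Ioi b, |g x| ≤ M := by
  obtain ⟨ε, hbε : b < ε, hnear⟩ := mem_nhdsGT_iff_exists_Ioo_subset.mp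
    (h₀.abs.eventually (eventually_le_nhds (lt_add_one |c₀|)))
  obtain ⟨N, hfar⟩ := eventually_atTop.mp
    (h₁.abs.eventually (eventually_le_nhds (lt_add_one |c₁|)))
  obtain ⟨C, hmid⟩ := isCompact_Icc.exists_bound_of_continuousOn
    (hg.mono fun y (hy : y ∈ Icc ((b + ε) / 2) N) => show b < y by linarith [hy.1])
  refine ⟨max (max (|c₀| + 1) (|c₁| + 1)) C, fun x (hx : b < x) => ?_⟩
  rcases lt_or_ge x ε with hxε | hεx
  · exact le_max_of_le_left (le_max_of_le_left (hnear ⟨hx, hxε⟩))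
  rcases le_or_gt x N with hxN | hNx
  · exact le_max_of_le_right (hmid x ⟨by linarith, hxN⟩)
  · exact le_max_of_le_left (le_max_of_le_right (hfar x hNx.le))

lemma mul_exp_neg_le_one_sub_exp_neg (x : ℝ) : x * exp (-x) ≤ 1 - exp (-x) := by
  have h := mul_le_mul_of_nonneg_right (add_one_le_exp x) (exp_pos (-x)).le
  rw [← exp_add, add_neg_cancel, exp_zero] at h
  linarith

lemma one_sub_exp_neg_pos {x : ℝ} (hx : 0 < x) : 0 < 1 - exp (-x) := by
  linarith [exp_lt_one_iff.mpr (neg_lt_zero.mpr hx)]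

lemma abs_geScoreRate_le {l v x : ℝ} (hl : 0 < l) (hv : 1 ≤ v) (hx : 0 < x) :
    |geScoreRate l v x| ≤ x + v / l := by
  have hs := one_sub_exp_neg_pos (mul_pos hl hx)
  have hratio : l * x * exp (-(l * x)) / (1 - exp (-(l * x))) ≤ 1 :=
    div_le_one_of_le₀ (mul_exp_neg_le_one_sub_exp_neg _) hs.le
  have hterm : (v - 1) * x * exp (-(l * x)) / (1 - exp (-(l * x)))
      = (v - 1) / l * (l * x * exp (-(l * x)) / (1 - exp (-(l * x)))) := by
    field_simp
  have hnonneg : 0 ≤ l * x * exp (-(l * x)) / (1 - exp (-(l * x))) := by positivity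
  have hvl : 0 ≤ (v - 1) / l := div_nonneg (by linarith) hl.le
  have hsum : v / l = 1 / l + (v - 1) / l := by ring
  have h1l : 0 < 1 / l := by positivity
  rw [geScoreRate, hterm, abs_le, hsum]
  constructor <;> nlinarith [mul_le_mul_of_nonneg_left hratio hvl, mul_nonneg hvl hnonneg]

section GE

variable {a l v : ℝ}

lemma geDensity_rpow_eq (hl : 0 ≤ l) (hv : 0 ≤ v) {x : ℝ} (hx : 0 ≤ x) :
    geDensity l v x ^ a
      = (l * v) ^ a * exp (-(a * l) * x) * (1 - exp (-(l * x))) ^ ((v - 1) * a) := by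
  have hs : 0 ≤ 1 - exp (-(l * x)) := sub_nonneg.mpr (exp_le_one_iff.mpr (by nlinarith))
  rw [geDensity, mul_rpow (by positivity) (rpow_nonneg hs _),
    mul_rpow (by positivity) (exp_pos _).le, ← exp_mul, ← rpow_mul hs]
  ring_nf

lemma continuous_geDensity (hv : 1 ≤ v) : Continuous (geDensity l v) := by
  unfold geDensity
  fun_prop (disch := linarith)

lemma tendsto_one_sub_exp_neg_nhdsGT_zero (hl : 0 < l) :
    Tendsto (fun x => 1 - exp (-(l * x))) (𝓝[>] 0) (𝓝[>] 0) := by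
  refine tendsto_nhdsWithin_of_tendsto_nhds_of_eventually_within _ ?_
    (eventually_mem_nhdsWithin.mono fun x hx => one_sub_exp_neg_pos (mul_pos hl hx))
  have hc : Continuous fun x => 1 - exp (-(l * x)) := by fun_prop
  simpa using (hc.tendsto 0).mono_left nhdsWithin_le_nhds

lemma tendsto_one_sub_exp_neg_atTop (hl : 0 < l) :
    Tendsto (fun x => 1 - exp (-(l * x))) atTop (𝓝 1) := by
  have h := tendsto_exp_atBot.comp (tendsto_neg_atTop_atBot.comp (tendsto_id.const_mul_atTop hl))
  simpa using (tendsto_const_nhds (x := (1 : ℝ))).sub h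

lemma tendsto_rpow_mul_geDensity_rpow_atTop (r : ℝ) (ha : 0 < a) (hl : 0 < l) (hv : 0 ≤ v) :
    Tendsto (fun x => x ^ r * geDensity l v x ^ a) atTop (𝓝 0) := by
  have hpow : Tendsto (fun x => (1 - exp (-(l * x))) ^ ((v - 1) * a)) atTop (𝓝 1) := by
    simpa [Function.comp_def] using
      ((continuousAt_rpow_const 1 _ (Or.inl one_ne_zero)).tendsto).comp
      (tendsto_one_sub_exp_neg_atTop hl)
  have h := ((tendsto_rpow_mul_exp_neg_mul_atTop_nhds_zero r (a * l) (mul_pos ha hl)).const_mul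
    ((l * v) ^ a)).mul hpow
  rw [mul_zero, zero_mul] at h
  refine h.congr' ((eventually_ge_atTop 0).mono fun x hx => ?_)
  dsimp only
  rw [geDensity_rpow_eq hl.le hv hx]
  ring

lemma tendsto_add_log_mul_rpow_nhdsGT_zero (c : ℝ) {p : ℝ} (hp : 0 < p) :
    Tendsto (fun s => (c + log s) * s ^ p) (𝓝[>] 0) (𝓝 0) := by
  have hpow : Tendsto (fun s : ℝ => s ^ p) (𝓝[>] 0) (𝓝 0) := by
    simpa [zero_rpow hp.ne'] using
      ((continuousAt_rpow_const 0 p (Or.inr hp.le)).tendsto).mono_left nhdsWithin_le_nhds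
  simpa [add_mul] using (hpow.const_mul c).add (tendsto_log_mul_rpow_nhdsGT_zero hp)

lemma tendsto_geScoreShape_nhdsGT_zero (hl : 0 < l) :
    Tendsto (geScoreShape l v) (𝓝[>] 0) atBot :=
  tendsto_atBot_add_const_left _ _ (tendsto_log_nhdsGT_zero.comp
    (tendsto_one_sub_exp_neg_nhdsGT_zero hl))

lemma tendsto_geScoreShape_atTop (hl : 0 < l) :
    Tendsto (geScoreShape l v) atTop (𝓝 (1 / v)) := by
  unfold geScoreShape
  simpa [Function.comp_def] using (tendsto_const_nhds (x := 1 / v)).add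
    ((continuousAt_log one_ne_zero).tendsto.comp (tendsto_one_sub_exp_neg_atTop hl))

lemma continuousOn_geScoreShape (hl : 0 < l) : ContinuousOn (geScoreShape l v) (Ioi 0) := by
  unfold geScoreShape
  exact continuousOn_const.add (ContinuousOn.log (by fun_prop)
    fun x hx => (one_sub_exp_neg_pos (mul_pos hl hx)).ne')

lemma tendsto_geScoreShape_mul_geDensity_rpow_nhdsGT_zero (ha : 0 < a) (hl : 0 < l)
    (hv : 1 < v) :
    Tendsto (fun x => geScoreShape l v x * geDensity l v x ^ a) (𝓝[>] 0) (𝓝 0) := by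
  have hexp :
      Tendsto (fun x => (l * v) ^ a * exp (-(a * l) * x)) (𝓝[>] 0) (𝓝 ((l * v) ^ a)) := by
    have hc : Continuous fun x => (l * v) ^ a * exp (-(a * l) * x) := by fun_prop
    simpa using (hc.tendsto 0).mono_left nhdsWithin_le_nhds
  have hlog := tendsto_add_log_mul_rpow_nhdsGT_zero (1 / v) (mul_pos (sub_pos.mpr hv) ha)
  have h := hexp.mul (hlog.comp (tendsto_one_sub_exp_neg_nhdsGT_zero hl))
  rw [mul_zero] at h
  refine h.congr' (eventually_mem_nhdsWithin.mono fun x (hx : 0 < x) => ?_)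
  dsimp only [Function.comp_apply]
  rw [geDensity_rpow_eq hl.le (by linarith) hx.le, geScoreShape]
  ring

lemma exists_abs_geScoreRate_mul_geDensity_rpow_le (ha : 0 < a) (hl : 0 < l) (hv : 1 ≤ v) :
    ∃ M, ∀ x ∈ Ioi (0 : ℝ), |geScoreRate l v x * geDensity l v x ^ a| ≤ M := by
  have hcont : Continuous fun x => (x + v / l) * geDensity l v x ^ a :=
    (continuous_id.add continuous_const).mul
      ((continuous_geDensity hv).rpow_const fun _ => Or.inr ha.le)
  have hinf : Tendsto (fun x => (x + v / l) * geDensity l v x ^ a) atTop (𝓝 0) := by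
    have h := (tendsto_rpow_mul_geDensity_rpow_atTop 1 ha hl (by linarith)).add
      ((tendsto_rpow_mul_geDensity_rpow_atTop 0 ha hl (by linarith)).const_mul (v / l))
    simpa [add_mul] using h
  obtain ⟨M, hM⟩ := exists_abs_le_of_continuousOn_Ioi_of_tendsto hcont.continuousOn
    ((hcont.tendsto 0).mono_left nhdsWithin_le_nhds) hinf
  refine ⟨M, fun x (hx : 0 < x) => ?_⟩
  have hf : 0 ≤ geDensity l v x ^ a := by
    rw [geDensity_rpow_eq hl.le (by linarith) hx.le]
    exact mul_nonneg (by positivity) (rpow_nonneg (one_sub_exp_neg_pos (mul_pos hl hx)).le _)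
  calc |geScoreRate l v x * geDensity l v x ^ a|
      = |geScoreRate l v x| * geDensity l v x ^ a := by rw [abs_mul, abs_of_nonneg hf]
    _ ≤ (x + v / l) * geDensity l v x ^ a :=
      mul_le_mul_of_nonneg_right (abs_geScoreRate_le hl hv hx) hf
    _ ≤ M := (le_abs_self _).trans (hM x hx)

lemma exists_abs_geScoreShape_mul_geDensity_rpow_le (ha : 0 < a) (hl : 0 < l) (hv : 1 < v) :
    ∃ M, ∀ x ∈ Ioi (0 : ℝ), |geScoreShape l v x * geDensity l v x ^ a| ≤ M := by
  refine exists_abs_le_of_continuousOn_Ioi_of_tendsto (c₁ := 0)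
    ((continuousOn_geScoreShape hl).mul ?_)
    (tendsto_geScoreShape_mul_geDensity_rpow_nhdsGT_zero ha hl hv) ?_
  · exact ((continuous_geDensity hv.le).rpow_const fun _ => Or.inr ha.le).continuousOn
  · simpa using (tendsto_geScoreShape_atTop hl).mul
      (tendsto_rpow_mul_geDensity_rpow_atTop 0 ha hl (by linarith))

lemma not_exists_abs_geScoreShape_le (hl : 0 < l) :
    ¬∃ M, ∀ x ∈ Ioi (0 : ℝ), |geScoreShape l v x| ≤ M := by
  rintro ⟨M, hM⟩
  obtain ⟨x, hxM, hx⟩ := (((tendsto_geScoreShape_nhdsGT_zero hl).eventually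
    (eventually_lt_atBot (-M))).and self_mem_nhdsWithin).exists
  linarith [neg_abs_le (geScoreShape l v x), hM x hx]

end GE

/-- Theorem 3: for `λ > 0`, `ν > 1` and `α ≥ 0`, both weighted score functions
`x ↦ u_λ(x) f(x; λ, ν)^α` and `x ↦ u_ν(x) f(x; λ, ν)^α` are bounded on `(0, ∞)` if and
only if `α > 0`; equivalently, the components of the influence function of the MDPDE
functional with tuning parameter `α` at the GE model are bounded if and only if `α > 0`. -/
theorem ge_influence_bounded_iff (a l v : ℝ) (ha : 0 ≤ a) (hl : 0 < l) (hv : 1 < v) :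
    ((∃ M : ℝ, ∀ x ∈ Ioi (0 : ℝ), |geScoreRate l v x * geDensity l v x ^ a| ≤ M) ∧
     (∃ M : ℝ, ∀ x ∈ Ioi (0 : ℝ), |geScoreShape l v x * geDensity l v x ^ a| ≤ M)) ↔
      0 < a := by
  refine ⟨fun ⟨_, hshape⟩ => ?_, fun ha =>
    ⟨exists_abs_geScoreRate_mul_geDensity_rpow_le ha hl hv.le,
      exists_abs_geScoreShape_mul_geDensity_rpow_le ha hl hv⟩⟩
  refine ha.lt_of_ne fun ha0 => not_exists_abs_geScoreShape_le (v := v) hl ?_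
  simpa [← ha0] using hshape
end
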